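/- Let n ≥ 1, and for each i let l_i, m_i ∈ [0,1]. Define c^1P = -∏_{i=0}^{n-1}(l_i + m_i - l_i m_i) and c^2P = -∏_{i=0}^{n-1} l_i - ∏_{i=0}^{n-1} m_i + ∏_{i=0}^{n-1} l_i m_i. Then c^1P ≤ c^2P. -/

import Mathlib

/-!
Read `x + y - x * y` as the probability that at least one of two independent events of
probabilities `x`, `y` occurs. For a single factor the inequality is the identity
`(a + b - ab)(c + d - cd) - (ac + bd - acbd) = ad(1 - b)(1 - c) + bc(1 - a)(1 - d) ≥ 0`,
and it passes to products by induction, since all quantities stay in `[0, 1]`.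
-/

open Finset Set

lemma add_sub_mul_mul_le {a b c d : ℝ} (ha : a ∈ Icc (0 : ℝ) 1) (hb : b ∈ Icc (0 : ℝ) 1)
    (hc : c ∈ Icc (0 : ℝ) 1) (hd : d ∈ Icc (0 : ℝ) 1) :
    a * c + b * d - a * c * (b * d) ≤ (a + b - a * b) * (c + d - c * d) := by
  have hgap : (a + b - a * b) * (c + d - c * d) - (a * c + b * d - a * c * (b * d)) =
      a * d * (1 - b) * (1 - c) + b * c * (1 - a) * (1 - d) := by ring
  rw [← sub_nonneg, hgap]
  have := ha.1; have := hb.1; have := hc.1; have := hd.1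
  have := sub_nonneg.2 ha.2; have := sub_nonneg.2 hb.2
  have := sub_nonneg.2 hc.2; have := sub_nonneg.2 hd.2
  positivity

lemma prod_mem_Icc_zero_one {ι : Type*} {s : Finset ι} {f : ι → ℝ}
    (hf : ∀ i ∈ s, f i ∈ Icc (0 : ℝ) 1) : ∏ i ∈ s, f i ∈ Icc (0 : ℝ) 1 :=
  ⟨prod_nonneg fun i hi => (hf i hi).1,
    prod_le_one (fun i hi => (hf i hi).1) fun i hi => (hf i hi).2⟩

lemma add_sub_mul_nonneg {a b : ℝ} (ha : a ∈ Icc (0 : ℝ) 1) (hb : 0 ≤ b) :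
    0 ≤ a + b - a * b := by
  nlinarith [ha.1, ha.2]

lemma add_sub_mul_prod_le_prod {ι : Type*} [DecidableEq ι] (s : Finset ι) {a b : ι → ℝ}
    (ha : ∀ i ∈ s, a i ∈ Icc (0 : ℝ) 1) (hb : ∀ i ∈ s, b i ∈ Icc (0 : ℝ) 1) :
    (∏ i ∈ s, a i) + ∏ i ∈ s, b i - (∏ i ∈ s, a i) * ∏ i ∈ s, b i ≤
      ∏ i ∈ s, (a i + b i - a i * b i) := by
  induction s using Finset.induction_on with
  | empty => simp
  | insert j s hj ih =>
    rw [Finset.forall_mem_insert] at ha hb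
    rw [prod_insert hj, prod_insert hj, prod_insert hj]
    calc _ ≤ (a j + b j - a j * b j) *
          ((∏ i ∈ s, a i) + ∏ i ∈ s, b i - (∏ i ∈ s, a i) * ∏ i ∈ s, b i) :=
        add_sub_mul_mul_le ha.1 hb.1 (prod_mem_Icc_zero_one ha.2) (prod_mem_Icc_zero_one hb.2)
      _ ≤ (a j + b j - a j * b j) * ∏ i ∈ s, (a i + b i - a i * b i) :=
        mul_le_mul_of_nonneg_left (ih ha.2 hb.2) (add_sub_mul_nonneg ha.1 hb.1.1)

theorem stmt_6_general (n : ℕ) (l m : ℕ → ℝ)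
    (hl : ∀ i < n, l i ∈ Set.Icc (0:ℝ) 1) (hm : ∀ i < n, m i ∈ Set.Icc (0:ℝ) 1) :
    -∏ i ∈ Finset.range n, (l i + m i - l i * m i) ≤
      -∏ i ∈ Finset.range n, l i - ∏ i ∈ Finset.range n, m i
        + ∏ i ∈ Finset.range n, (l i * m i) := by
  have h := add_sub_mul_prod_le_prod (range n) (a := l) (b := m)
    (fun i hi => hl i (mem_range.1 hi)) (fun i hi => hm i (mem_range.1 hi))
  rw [prod_mul_distrib]
  linarith

theorem stmt_6 (n : ℕ) (hn : 1 ≤ n) (l m : ℕ → ℝ)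
    (hl : ∀ i < n, l i ∈ Set.Icc (0:ℝ) 1) (hm : ∀ i < n, m i ∈ Set.Icc (0:ℝ) 1) :
    -∏ i ∈ Finset.range n, (l i + m i - l i * m i) ≤
      -∏ i ∈ Finset.range n, l i - ∏ i ∈ Finset.range n, m i
        + ∏ i ∈ Finset.range n, (l i * m i) :=
  stmt_6_general n l m hl hm
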